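/- arXiv:2405.15740 — 2 statements merged into one kernel-verified Lean document; each statement's English description precedes it below -/
import Mathlib

section
/- Unbiasedness of the FIPTIW estimating function at a fixed time point (single-time-point version of Theorem 1). Let (Ω, F, P) be a probability space, let Y : Ω → ℝ be integrable, let X : Ω → ℝ^p, W : Ω → ℝ^q, Z : Ω → ℝ^r be measurable, and let N : Ω → {0,1} be a measurable observation indicator. Let D : Ω → {0,1} be σ(X)-measurable (the treatment indicator is among the outcome-model covariates). Let π be a version of the conditional expectation E[D | σ(W)] and suppose there is ε > 0 with ε ≤ π ≤ 1 − ε almost surely; define the inverse probability of treatment weight w^IPTW = D/π + (1 − D)/(1 − π). Let γ ∈ ℝ^r, λ₀ > 0, let h : ℝ^p → ℝ be a bounded nonnegative measurable function, and suppose the map ω ↦ exp(−⟨γ, Z(ω)⟩) is bounded; define the inverse intensity weight w^IIW = h(X)·exp(−⟨γ, Z⟩). Assume: (i) E[N | σ(X) ⊔ σ(W) ⊔ σ(Z) ⊔ σ(Y)] = λ₀·exp(⟨γ, Z⟩) almost surely (independent sampling with correctly specified intensity at the given time point); (ii) E[Y | σ(X) ⊔ σ(W)] = E[Y | σ(X)]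 almost surely. Let μ be a version of E[Y | σ(X)]. Then for every bounded σ(X)-measurable φ : Ω → ℝ, E[ φ · (Y − μ) · w^IPTW · w^IIW · N ] = 0. -/
/-!
Condition first on `σ(X) ⊔ σ(W) ⊔ σ(Z) ⊔ σ(Y)`: every factor other than `N` is measurable for it,
so `N` may be replaced by its intensity `λ₀ exp ⟨γ, Z⟩`, which cancels the inverse intensity
weight up to `h(X)`. What remains is `λ₀ E[φ w^IPTW h(X) (Y - μ)]`; there the factor in front of
`Y - μ` is bounded and `σ(X) ⊔ σ(W)`-measurable, while `E[Y - μ | σ(X) ⊔ σ(W)] = 0` by mean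
independence.
-/

open MeasureTheory

section CondExp

variable {Ω : Type*} {m m' m₀ : MeasurableSpace Ω} {P : Measure Ω} [IsFiniteMeasure P]

theorem integral_mul_condExp {f g : Ω → ℝ} (hm : m ≤ m₀) (hf : StronglyMeasurable[m] f)
    (hfg : Integrable (f * g) P) (hg : Integrable g P) :
    ∫ ω, f ω * P[g|m] ω ∂P = ∫ ω, f ω * g ω ∂P :=
  calc ∫ ω, f ω * P[g|m] ω ∂P = ∫ ω, P[f * g|m] ω ∂P :=
        integral_congr_ae (condExp_mul_of_stronglyMeasurable_left hf hfg hg).symm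
    _ = ∫ ω, f ω * g ω ∂P := integral_condExp hm

theorem condExp_sub_condExp_ae_eq_zero {Y : Ω → ℝ} (hmm' : m ≤ m') (hm' : m' ≤ m₀)
    (hY : Integrable Y P) (hYm' : P[Y|m'] =ᵐ[P] P[Y|m]) :
    P[Y - P[Y|m]|m'] =ᵐ[P] 0 := by
  have hproj : P[P[Y|m]|m'] = P[Y|m] :=
    condExp_of_stronglyMeasurable hm' (stronglyMeasurable_condExp.mono hmm') integrable_condExp
  filter_upwards [condExp_sub hY (integrable_condExp (m := m) (f := Y)) m', hYm'] with ω hsub hω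
  rw [hsub, Pi.sub_apply, hproj, hω, sub_self, Pi.zero_apply]

theorem integral_mul_sub_condExp_eq_zero {Y k : Ω → ℝ} {c : ℝ} (hmm' : m ≤ m') (hm' : m' ≤ m₀)
    (hY : Integrable Y P) (hYm' : P[Y|m'] =ᵐ[P] P[Y|m])
    (hk : StronglyMeasurable[m'] k) (hk_bound : ∀ᵐ ω ∂P, ‖k ω‖ ≤ c) :
    ∫ ω, k ω * (Y ω - P[Y|m] ω) ∂P = 0 := by
  have hR : Integrable (Y - P[Y|m]) P := hY.sub integrable_condExp
  calc ∫ ω, k ω * (Y ω - P[Y|m] ω) ∂P = ∫ ω, k ω * P[Y - P[Y|m]|m'] ω ∂P :=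
        (integral_mul_condExp hm' hk
          (hR.bdd_mul (hk.mono hm').aestronglyMeasurable hk_bound) hR).symm
    _ = 0 := by
        rw [integral_eq_zero_of_ae]
        filter_upwards [condExp_sub_condExp_ae_eq_zero hmm' hm' hY hYm'] with ω hω
        simp [hω]

theorem integral_mul_sub_condExp_mul_mul_eq_zero {mH mG : MeasurableSpace Ω} {Y k v N : Ω → ℝ}
    {ck cv cN c : ℝ} (hmH : m ≤ mH) (hHG : mH ≤ mG) (hG : mG ≤ m₀)
    (hY : StronglyMeasurable[mG] Y) (hYint : Integrable Y P) (hYH : P[Y|mH] =ᵐ[P] P[Y|m])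
    (hk : StronglyMeasurable[mH] k) (hk_bound : ∀ᵐ ω ∂P, ‖k ω‖ ≤ ck)
    (hv : StronglyMeasurable[mG] v) (hv_bound : ∀ᵐ ω ∂P, ‖v ω‖ ≤ cv)
    (hN : AEStronglyMeasurable[m₀] N P) (hN_bound : ∀ᵐ ω ∂P, ‖N ω‖ ≤ cN)
    (hNv : ∀ᵐ ω ∂P, v ω * P[N|mG] ω = c) :
    ∫ ω, k ω * (Y ω - P[Y|m] ω) * v ω * N ω ∂P = 0 := by
  have hR : Integrable (fun ω => Y ω - P[Y|m] ω) P := hYint.sub integrable_condExp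
  have hkRv : StronglyMeasurable[mG] (fun ω => k ω * (Y ω - P[Y|m] ω) * v ω) :=
    ((hk.mono hHG).mul (hY.sub (stronglyMeasurable_condExp.mono (hmH.trans hHG)))).mul hv
  have hkvNR : Integrable (fun ω => (k ω * v ω * N ω) * (Y ω - P[Y|m] ω)) P := by
    refine hR.bdd_mul (c := ck * cv * cN) ?_ ?_
    · exact ((hk.mono (hHG.trans hG)).aestronglyMeasurable.mul
        (hv.mono hG).aestronglyMeasurable).mul hN
    · filter_upwards [hk_bound, hv_bound, hN_bound] with ω hkω hvω hNω
      exact norm_mul_le_of_le (norm_mul_le_of_le hkω hvω) hNω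
  calc ∫ ω, k ω * (Y ω - P[Y|m] ω) * v ω * N ω ∂P
      = ∫ ω, k ω * (Y ω - P[Y|m] ω) * v ω * P[N|mG] ω ∂P := by
        refine (integral_mul_condExp hG hkRv (hkvNR.congr (ae_of_all _ fun ω => ?_))
          (.of_bound hN cN hN_bound)).symm
        simp only [Pi.mul_apply]
        ring
    _ = c * ∫ ω, k ω * (Y ω - P[Y|m] ω) ∂P := by
        rw [← integral_const_mul]
        refine integral_congr_ae ?_
        filter_upwards [hNv] with ω hω
        rw [← hω]
        ring
    _ = 0 := by
        rw [integral_mul_sub_condExp_eq_zero hmH (hHG.trans hG) hYint hYH hk hk_bound, mul_zero]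

end CondExp

theorem abs_div_add_one_sub_div_one_sub_le {d π ε : ℝ} (hε : 0 < ε) (hd₀ : 0 ≤ d) (hd₁ : d ≤ 1)
    (hπ₀ : ε ≤ π) (hπ₁ : π ≤ 1 - ε) :
    |d / π + (1 - d) / (1 - π)| ≤ 1 / ε := by
  have htreated : d / π ≤ d / ε := div_le_div_of_nonneg_left hd₀ hε hπ₀
  have hcontrol : (1 - d) / (1 - π) ≤ (1 - d) / ε :=
    div_le_div_of_nonneg_left (by linarith) hε (by linarith)
  rw [abs_of_nonneg (add_nonneg (div_nonneg hd₀ (by linarith))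
    (div_nonneg (by linarith) (by linarith)))]
  calc d / π + (1 - d) / (1 - π) ≤ d / ε + (1 - d) / ε := add_le_add htreated hcontrol
    _ = 1 / ε := by ring

theorem fiptiw_estimating_function_unbiased_general
    {Ω : Type*} [MeasurableSpace Ω] (P : Measure Ω) [IsProbabilityMeasure P]
    {p q r : ℕ}
    (Y : Ω → ℝ) (hYmeas : Measurable Y) (hYint : Integrable Y P)
    (X : Ω → Fin p → ℝ) (hX : Measurable X)
    (W : Ω → Fin q → ℝ) (hW : Measurable W)
    (Z : Ω → Fin r → ℝ) (hZ : Measurable Z)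
    (N : Ω → ℝ) (hN : Measurable N) (hNval : ∀ ω, N ω = 0 ∨ N ω = 1)
    (D : Ω → ℝ) (hD : Measurable[MeasurableSpace.comap X inferInstance] D)
    (hDval : ∀ ω, D ω = 0 ∨ D ω = 1)
    (π : Ω → ℝ) (hπ : π =ᵐ[P] P[D | MeasurableSpace.comap W inferInstance])
    (ε : ℝ) (hε : 0 < ε) (hπbdd : ∀ᵐ ω ∂P, ε ≤ π ω ∧ π ω ≤ 1 - ε)
    (γ : Fin r → ℝ) (lam0 : ℝ)
    (h : (Fin p → ℝ) → ℝ) (hhmeas : Measurable h) (hhnonneg : ∀ x, 0 ≤ h x)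
    (hhbdd : ∃ Ch : ℝ, ∀ x, h x ≤ Ch)
    (hexpbdd : ∃ Ce : ℝ, ∀ ω, Real.exp (-(∑ i, γ i * Z ω i)) ≤ Ce)
    -- (i) independent sampling with correctly specified intensity at this time point
    (hintensity : P[N | MeasurableSpace.comap X inferInstance ⊔ MeasurableSpace.comap W inferInstance
          ⊔ MeasurableSpace.comap Z inferInstance ⊔ MeasurableSpace.comap Y inferInstance]
        =ᵐ[P] fun ω => lam0 * Real.exp (∑ i, γ i * Z ω i))
    -- (ii) conditional mean independence of the outcome from the treatment-model covariates
    (hmeanind : P[Y | MeasurableSpace.comap X inferInstance ⊔ MeasurableSpace.comap W inferInstance]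
        =ᵐ[P] P[Y | MeasurableSpace.comap X inferInstance])
    (μ : Ω → ℝ) (hμ : μ =ᵐ[P] P[Y | MeasurableSpace.comap X inferInstance]) :
    ∀ φ : Ω → ℝ, Measurable[MeasurableSpace.comap X inferInstance] φ →
      (∃ Cφ : ℝ, ∀ ω, |φ ω| ≤ Cφ) →
      ∫ ω, φ ω * (Y ω - μ ω) * (D ω / π ω + (1 - D ω) / (1 - π ω)) *
        (h (X ω) * Real.exp (-(∑ i, γ i * Z ω i))) * N ω ∂P = 0 := by
  rintro φ hφ ⟨Cφ, hφ_bound⟩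
  obtain ⟨Ch, hCh⟩ := hhbdd
  obtain ⟨Ce, hCe⟩ := hexpbdd
  calc _ = ∫ ω, φ ω * (D ω / P[D|MeasurableSpace.comap W inferInstance] ω
          + (1 - D ω) / (1 - P[D|MeasurableSpace.comap W inferInstance] ω)) * h (X ω)
          * (Y ω - P[Y|MeasurableSpace.comap X inferInstance] ω)
          * Real.exp (-(∑ i, γ i * Z ω i)) * N ω ∂P := by
        refine integral_congr_ae ?_
        filter_upwards [hμ, hπ] with ω hμω hπω
        rw [hμω, hπω]
        ring
    _ = 0 := by
      refine integral_mul_sub_condExp_mul_mul_eq_zero (ck := Cφ * (1 / ε) * Ch) (cv := Ce) (cN := 1)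
        (c := lam0) le_sup_left (le_sup_left.trans le_sup_left)
        (sup_le (sup_le (sup_le hX.comap_le hW.comap_le) hZ.comap_le) hYmeas.comap_le)
        ?_ hYint hmeanind ?_ ?_ ?_ ?_ hN.aestronglyMeasurable ?_ ?_
      · exact (comap_measurable Y).stronglyMeasurable.mono le_sup_right
      · have hXH := le_sup_left (a := MeasurableSpace.comap X inferInstance)
          (b := MeasurableSpace.comap W inferInstance)
        have hφ' := hφ.mono hXH le_rfl
        have hD' := hD.mono hXH le_rfl
        have hX' := (comap_measurable X).mono hXH le_rfl
        have hπ' := (stronglyMeasurable_condExp (f := D) (μ := P)).measurable.mono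
          (le_sup_right (a := MeasurableSpace.comap X inferInstance)
            (b := MeasurableSpace.comap W inferInstance)) le_rfl
        exact Measurable.stronglyMeasurable (by fun_prop)
      · filter_upwards [hπbdd, hπ] with ω ⟨hπ₀, hπ₁⟩ hπω
        have hD₀₁ : 0 ≤ D ω ∧ D ω ≤ 1 := by rcases hDval ω with hω | hω <;> simp [hω]
        rw [← hπω]
        exact norm_mul_le_of_le (norm_mul_le_of_le (hφ_bound ω)
          (abs_div_add_one_sub_div_one_sub_le hε hD₀₁.1 hD₀₁.2 hπ₀ hπ₁))
          ((abs_of_nonneg (hhnonneg _)).trans_le (hCh _))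
      · refine StronglyMeasurable.mono (m' := MeasurableSpace.comap Z inferInstance) ?_
          (le_sup_right.trans le_sup_left)
        have := comap_measurable (m := MeasurableSpace.pi) Z
        exact Measurable.stronglyMeasurable (by fun_prop)
      · exact ae_of_all _ fun ω => (abs_of_pos (Real.exp_pos _)).trans_le (hCe ω)
      · exact ae_of_all _ fun ω => by rcases hNval ω with hω | hω <;> simp [hω]
      · filter_upwards [hintensity] with ω hω
        rw [hω, mul_left_comm, ← Real.exp_add, neg_add_cancel, Real.exp_zero, mul_one]

/-- Unbiasedness of the FIPTIW estimating function at a fixed time point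
(single-time-point version of Theorem 1 of the paper). -/
theorem fiptiw_estimating_function_unbiased
    {Ω : Type*} [MeasurableSpace Ω] (P : Measure Ω) [IsProbabilityMeasure P]
    {p q r : ℕ}
    (Y : Ω → ℝ) (hYmeas : Measurable Y) (hYint : Integrable Y P)
    (X : Ω → Fin p → ℝ) (hX : Measurable X)
    (W : Ω → Fin q → ℝ) (hW : Measurable W)
    (Z : Ω → Fin r → ℝ) (hZ : Measurable Z)
    (N : Ω → ℝ) (hN : Measurable N) (hNval : ∀ ω, N ω = 0 ∨ N ω = 1)
    (D : Ω → ℝ) (hD : Measurable[MeasurableSpace.comap X inferInstance] D)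
    (hDval : ∀ ω, D ω = 0 ∨ D ω = 1)
    (π : Ω → ℝ) (hπ : π =ᵐ[P] P[D | MeasurableSpace.comap W inferInstance])
    (ε : ℝ) (hε : 0 < ε) (hπbdd : ∀ᵐ ω ∂P, ε ≤ π ω ∧ π ω ≤ 1 - ε)
    (γ : Fin r → ℝ) (lam0 : ℝ) (hlam0 : 0 < lam0)
    (h : (Fin p → ℝ) → ℝ) (hhmeas : Measurable h) (hhnonneg : ∀ x, 0 ≤ h x)
    (hhbdd : ∃ Ch : ℝ, ∀ x, h x ≤ Ch)
    (hexpbdd : ∃ Ce : ℝ, ∀ ω, Real.exp (-(∑ i, γ i * Z ω i)) ≤ Ce)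
    -- (i) independent sampling with correctly specified intensity at this time point
    (hintensity : P[N | MeasurableSpace.comap X inferInstance ⊔ MeasurableSpace.comap W inferInstance
          ⊔ MeasurableSpace.comap Z inferInstance ⊔ MeasurableSpace.comap Y inferInstance]
        =ᵐ[P] fun ω => lam0 * Real.exp (∑ i, γ i * Z ω i))
    -- (ii) conditional mean independence of the outcome from the treatment-model covariates
    (hmeanind : P[Y | MeasurableSpace.comap X inferInstance ⊔ MeasurableSpace.comap W inferInstance]
        =ᵐ[P] P[Y | MeasurableSpace.comap X inferInstance])
    (μ : Ω → ℝ) (hμ : μ =ᵐ[P] P[Y | MeasurableSpace.comap X inferInstance]) :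
    ∀ φ : Ω → ℝ, Measurable[MeasurableSpace.comap X inferInstance] φ →
      (∃ Cφ : ℝ, ∀ ω, |φ ω| ≤ Cφ) →
      ∫ ω, φ ω * (Y ω - μ ω) * (D ω / π ω + (1 - D ω) / (1 - π ω)) *
        (h (X ω) * Real.exp (-(∑ i, γ i * Z ω i))) * N ω ∂P = 0 :=
  fiptiw_estimating_function_unbiased_general P Y hYmeas hYint X hX W hW Z hZ N hN hNval D hD hDval
    π hπ ε hε hπbdd γ lam0 h hhmeas hhnonneg hhbdd hexpbdd hintensity hmeanind μ hμ
end

section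
/- Unbiasedness of the inverse-intensity-weighted estimating function at a fixed time point. Let (Ω, F, P) be a probability space, let Y : Ω → ℝ be integrable, let X : Ω → ℝ^p and Z : Ω → ℝ^r be measurable, and let N : Ω → {0,1} be a measurable observation indicator. Let γ ∈ ℝ^r, λ₀ > 0, let h : ℝ^p → ℝ be bounded nonnegative measurable, and suppose ω ↦ exp(−⟨γ, Z(ω)⟩) is bounded. Assume E[N | σ(X) ⊔ σ(Z) ⊔ σ(Y)] = λ₀·exp(⟨γ, Z⟩) almost surely. Let μ be a version of E[Y | σ(X)]. Then for every bounded σ(X)-measurable φ : Ω → ℝ, E[ φ · (Y − μ) · h(X) · exp(−⟨γ, Z⟩) · N ] = 0. -/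
open MeasureTheory

/-! Conditioning on `σ(X, Z, Y)`, the weighted residual is measurable, so `N` may be replaced by
its conditional intensity `λ₀ exp ⟨γ, Z⟩`. The weight cancels this up to the constant `λ₀`, leaving
`λ₀ E[φ h(X) (Y - E[Y | X])]`, which vanishes because `φ h(X)` is `σ(X)`-measurable. -/

theorem exists_abs_mul_le {α : Type*} {f g : α → ℝ} (hf : ∃ C, ∀ x, |f x| ≤ C)
    (hg : ∃ C, ∀ x, |g x| ≤ C) : ∃ C, ∀ x, |f x * g x| ≤ C := by
  obtain ⟨Cf, hCf⟩ := hf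
  obtain ⟨Cg, hCg⟩ := hg
  refine ⟨Cf * Cg, fun x => ?_⟩
  rw [abs_mul]
  exact mul_le_mul (hCf x) (hCg x) (abs_nonneg _) ((abs_nonneg _).trans (hCf x))

section CondExp

variable {Ω : Type*} {m₁ m m₀ : MeasurableSpace Ω} {P : Measure Ω}

theorem integral_mul_eq_integral_mul_condExp (hm : m ≤ m₀) [SigmaFinite (P.trim hm)]
    {f g : Ω → ℝ} (hf : StronglyMeasurable[m] f) (hfg : Integrable (f * g) P)
    (hg : Integrable g P) :
    ∫ ω, f ω * g ω ∂P = ∫ ω, f ω * P[g|m] ω ∂P :=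
  (integral_condExp hm).symm.trans
    (integral_congr_ae (condExp_mul_of_stronglyMeasurable_left hf hfg hg))

theorem condExp_sub_condExp_ae_eq_zero_s2 (hm : m ≤ m₀) [SigmaFinite (P.trim hm)] {g : Ω → ℝ}
    (hg : Integrable g P) : P[g - P[g|m]|m] =ᵐ[P] 0 := by
  filter_upwards [condExp_sub hg integrable_condExp m] with ω hω
  rw [hω, Pi.sub_apply, condExp_of_stronglyMeasurable hm stronglyMeasurable_condExp
    integrable_condExp, sub_self, Pi.zero_apply]

theorem integral_mul_sub_condExp_eq_zero_s2 (hm : m ≤ m₀) [SigmaFinite (P.trim hm)]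
    {f g : Ω → ℝ} (hf : StronglyMeasurable[m] f) (hfg : Integrable (f * (g - P[g|m])) P)
    (hg : Integrable g P) :
    ∫ ω, f ω * (g ω - P[g|m] ω) ∂P = 0 := by
  refine (integral_mul_eq_integral_mul_condExp hm hf hfg (hg.sub integrable_condExp)).trans <|
    (integral_congr_ae ?_).trans (integral_zero Ω ℝ)
  filter_upwards [condExp_sub_condExp_ae_eq_zero_s2 hm hg] with ω hω
  simp [hω]

theorem integral_mul_sub_condExp_mul_mul_eq_zero_s2 [IsFiniteMeasure P]
    (hm₁ : m₁ ≤ m) (hm : m ≤ m₀) {b w Y N : Ω → ℝ} {c : ℝ}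
    (hb : StronglyMeasurable[m₁] b) (hb_bdd : ∃ C, ∀ ω, |b ω| ≤ C)
    (hw : StronglyMeasurable[m] w) (hw_bdd : ∃ C, ∀ ω, |w ω| ≤ C)
    (hY : StronglyMeasurable[m] Y) (hYint : Integrable Y P)
    (hN : AEStronglyMeasurable N P) (hN_bdd : ∃ C, ∀ ω, |N ω| ≤ C)
    (hweight : ∀ᵐ ω ∂P, w ω * P[N|m] ω = c) :
    ∫ ω, b ω * (Y ω - P[Y|m₁] ω) * w ω * N ω ∂P = 0 := by
  have hR : Integrable (Y - P[Y|m₁]) P := hYint.sub integrable_condExp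
  have hNint : Integrable N P := by
    obtain ⟨C, hC⟩ := hN_bdd
    exact (integrable_const C).mono' hN (.of_forall hC)
  have hbR : Integrable (b * (Y - P[Y|m₁])) P := by
    obtain ⟨C, hC⟩ := hb_bdd
    exact hR.bdd_mul (hb.mono (hm₁.trans hm)).aestronglyMeasurable (.of_forall hC)
  have hbwRN : Integrable (b * w * (Y - P[Y|m₁]) * N) P := by
    obtain ⟨C, hC⟩ := exists_abs_mul_le (exists_abs_mul_le hb_bdd hw_bdd) hN_bdd
    refine (hR.bdd_mul (((hb.mono (hm₁.trans hm)).mul (hw.mono hm)).aestronglyMeasurable.mul hN)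
      (.of_forall hC)).congr (.of_forall fun ω => ?_)
    simp only [Pi.mul_apply]
    ring
  have hbwR : StronglyMeasurable[m] (b * w * (Y - P[Y|m₁])) :=
    ((hb.mono hm₁).mul hw).mul (hY.sub (stronglyMeasurable_condExp.mono hm₁))
  calc ∫ ω, b ω * (Y ω - P[Y|m₁] ω) * w ω * N ω ∂P
      = ∫ ω, (b * w * (Y - P[Y|m₁])) ω * N ω ∂P := by
        congr 1 with ω
        simp only [Pi.mul_apply, Pi.sub_apply]
        ring
    _ = ∫ ω, (b * w * (Y - P[Y|m₁])) ω * P[N|m] ω ∂P :=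
        integral_mul_eq_integral_mul_condExp hm hbwR hbwRN hNint
    _ = ∫ ω, c * (b ω * (Y ω - P[Y|m₁] ω)) ∂P := by
        refine integral_congr_ae ?_
        filter_upwards [hweight] with ω hω
        simp only [Pi.mul_apply, Pi.sub_apply, ← hω]
        ring
    _ = 0 := by
        rw [integral_const_mul, integral_mul_sub_condExp_eq_zero_s2 (hm₁.trans hm) hb hbR hYint,
          mul_zero]

end CondExp

theorem iiw_estimating_function_unbiased_general
    {Ω : Type*} [MeasurableSpace Ω] (P : Measure Ω) [IsProbabilityMeasure P]
    {p r : ℕ}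
    (Y : Ω → ℝ) (hYmeas : Measurable Y) (hYint : Integrable Y P)
    (X : Ω → Fin p → ℝ) (hX : Measurable X)
    (Z : Ω → Fin r → ℝ) (hZ : Measurable Z)
    (N : Ω → ℝ) (hN : Measurable N) (hNval : ∀ ω, N ω = 0 ∨ N ω = 1)
    (γ : Fin r → ℝ) (lam0 : ℝ)
    (h : (Fin p → ℝ) → ℝ) (hhmeas : Measurable h) (hhnonneg : ∀ x, 0 ≤ h x)
    (hhbdd : ∃ Ch : ℝ, ∀ x, h x ≤ Ch)
    (hexpbdd : ∃ Ce : ℝ, ∀ ω, Real.exp (-(∑ i, γ i * Z ω i)) ≤ Ce)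
    (hintensity : P[N | MeasurableSpace.comap X inferInstance
          ⊔ MeasurableSpace.comap Z inferInstance ⊔ MeasurableSpace.comap Y inferInstance]
        =ᵐ[P] fun ω => lam0 * Real.exp (∑ i, γ i * Z ω i))
    (μ : Ω → ℝ) (hμ : μ =ᵐ[P] P[Y | MeasurableSpace.comap X inferInstance]) :
    ∀ φ : Ω → ℝ, Measurable[MeasurableSpace.comap X inferInstance] φ →
      (∃ Cφ : ℝ, ∀ ω, |φ ω| ≤ Cφ) →
      ∫ ω, φ ω * (Y ω - μ ω) * (h (X ω) * Real.exp (-(∑ i, γ i * Z ω i))) * N ω ∂P = 0 := by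
  rintro φ hφ hφ_bdd
  have hhX_bdd : ∃ C, ∀ ω, |h (X ω)| ≤ C := by
    obtain ⟨C, hC⟩ := hhbdd
    exact ⟨C, fun ω => (abs_of_nonneg (hhnonneg _)).trans_le (hC _)⟩
  have he_bdd : ∃ C, ∀ ω, |Real.exp (-(∑ i, γ i * Z ω i))| ≤ C := by
    obtain ⟨C, hC⟩ := hexpbdd
    exact ⟨C, fun ω => (abs_of_pos (Real.exp_pos _)).trans_le (hC ω)⟩
  calc ∫ ω, φ ω * (Y ω - μ ω) * (h (X ω) * Real.exp (-(∑ i, γ i * Z ω i))) * N ω ∂P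
      = ∫ ω, φ ω * h (X ω) * (Y ω - P[Y|MeasurableSpace.comap X inferInstance] ω) *
          Real.exp (-(∑ i, γ i * Z ω i)) * N ω ∂P := by
        refine integral_congr_ae ?_
        filter_upwards [hμ] with ω hω
        rw [hω]
        ring
    _ = 0 := by
        apply integral_mul_sub_condExp_mul_mul_eq_zero_s2
          (m := .comap X inferInstance ⊔ .comap Z inferInstance ⊔ .comap Y inferInstance)
          (le_sup_left.trans le_sup_left) (sup_le (sup_le hX.comap_le hZ.comap_le) hYmeas.comap_le)
          (hb_bdd := exists_abs_mul_le hφ_bdd hhX_bdd) (hw_bdd := he_bdd) (hYint := hYint)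
          (hN := hN.aestronglyMeasurable)
          (hN_bdd := ⟨1, fun ω => by rcases hNval ω with h0 | h0 <;> simp [h0]⟩)
        case hb => exact (hφ.mul (hhmeas.comp (comap_measurable X))).stronglyMeasurable
        case hw =>
          apply Measurable.stronglyMeasurable
          have : Measurable fun z : Fin r → ℝ => Real.exp (-(∑ i, γ i * z i)) := by fun_prop
          exact (this.comp (comap_measurable Z)).mono (le_sup_right.trans le_sup_left) le_rfl
        case hY =>
          apply Measurable.stronglyMeasurable
          exact (comap_measurable Y).mono le_sup_right le_rfl
        case hweight =>
          filter_upwards [hintensity] with ω hω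
          rw [hω, mul_left_comm, ← Real.exp_add, neg_add_cancel, Real.exp_zero, mul_one]

/-- Unbiasedness of the inverse-intensity-weighted (IIW) estimating function
at a fixed time point. -/
theorem iiw_estimating_function_unbiased
    {Ω : Type*} [MeasurableSpace Ω] (P : Measure Ω) [IsProbabilityMeasure P]
    {p r : ℕ}
    (Y : Ω → ℝ) (hYmeas : Measurable Y) (hYint : Integrable Y P)
    (X : Ω → Fin p → ℝ) (hX : Measurable X)
    (Z : Ω → Fin r → ℝ) (hZ : Measurable Z)
    (N : Ω → ℝ) (hN : Measurable N) (hNval : ∀ ω, N ω = 0 ∨ N ω = 1)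
    (γ : Fin r → ℝ) (lam0 : ℝ) (hlam0 : 0 < lam0)
    (h : (Fin p → ℝ) → ℝ) (hhmeas : Measurable h) (hhnonneg : ∀ x, 0 ≤ h x)
    (hhbdd : ∃ Ch : ℝ, ∀ x, h x ≤ Ch)
    (hexpbdd : ∃ Ce : ℝ, ∀ ω, Real.exp (-(∑ i, γ i * Z ω i)) ≤ Ce)
    (hintensity : P[N | MeasurableSpace.comap X inferInstance
          ⊔ MeasurableSpace.comap Z inferInstance ⊔ MeasurableSpace.comap Y inferInstance]
        =ᵐ[P] fun ω => lam0 * Real.exp (∑ i, γ i * Z ω i))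
    (μ : Ω → ℝ) (hμ : μ =ᵐ[P] P[Y | MeasurableSpace.comap X inferInstance]) :
    ∀ φ : Ω → ℝ, Measurable[MeasurableSpace.comap X inferInstance] φ →
      (∃ Cφ : ℝ, ∀ ω, |φ ω| ≤ Cφ) →
      ∫ ω, φ ω * (Y ω - μ ω) * (h (X ω) * Real.exp (-(∑ i, γ i * Z ω i))) * N ω ∂P = 0 :=
  iiw_estimating_function_unbiased_general P Y hYmeas hYint X hX Z hZ N hN hNval γ lam0 h hhmeas
    hhnonneg hhbdd hexpbdd hintensity μ hμ
end
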